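/- arXiv:2308.16363 — 2 statements merged into one kernel-verified Lean document; each statement's English description precedes it below -/
import Mathlib

section
/- In a CD neighborhood graph, the raw betweenness of the focal vertex equals the total count of shortest paths through it: B(v) = Σ_{s ≠ v} Σ_{t ≠ v} σ(s,t|v), i.e. each nonzero term σ(s,t|v)/σ(s,t) in the definition of B(v) has denominator σ(s,t) = 1. -/
open Finset

variable {V : Type*}

/-- `l` is a directed path from `s` to `t` in the directed graph with adjacency
relation `adj`: consecutive vertices are joined by edges, it starts at `s`,
ends at `t`, and has no repeated vertices. -/
def IsDirPath (adj : V → V → Prop) (s t : V) (l : List V) : Prop :=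
  l.Chain' adj ∧ l.head? = some s ∧ l.getLast? = some t ∧ l.Nodup

/-- `l` is a shortest directed path from `s` to `t`. -/
def IsShortestDirPath (adj : V → V → Prop) (s t : V) (l : List V) : Prop :=
  IsDirPath adj s t l ∧ ∀ l', IsDirPath adj s t l' → l.length ≤ l'.length

/-- `x` occurs as an interior vertex of the list `l` (i.e. `x` is a member of `l`
which is neither the first nor the last entry). -/
def ListInterior (l : List V) (x : V) : Prop := x ∈ l.tail.dropLast

/-- `σ(s,t)`: the number of shortest directed paths from `s` to `t`. -/
noncomputable def numShortest (adj : V → V → Prop) (s t : V) : ℕ :=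
  {l : List V | IsShortestDirPath adj s t l}.ncard

/-- `σ(s,t∣x)`: the number of shortest directed paths from `s` to `t` that pass
through `x` as an interior vertex. -/
noncomputable def numShortestThrough (adj : V → V → Prop) (s t x : V) : ℕ :=
  {l : List V | IsShortestDirPath adj s t l ∧ ListInterior l x}.ncard

/-- A CD Index neighborhood graph: a directed graph whose vertex set is the
disjoint union `{v} ∪ I ∪ J ∪ K ∪ T` of the focal vertex `v` and four pairwise
disjoint finite sets, with the edge structure of the CD Index neighborhood. -/
structure CDGraph (V : Type*) where
  /-- the adjacency relation: `adj u w` means there is a directed edge `u → w` -/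
  adj : V → V → Prop
  /-- the focal vertex -/
  v : V
  /-- the set of `I`-type vertices -/
  I : Finset V
  /-- the set of `J`-type vertices -/
  J : Finset V
  /-- the set of `K`-type vertices -/
  K : Finset V
  /-- the set of vertices cited by `v` -/
  T : Finset V
  v_not_I : v ∉ I
  v_not_J : v ∉ J
  v_not_K : v ∉ K
  v_not_T : v ∉ T
  disj_IJ : Disjoint I J
  disj_IK : Disjoint I K
  disj_IT : Disjoint I T
  disj_JK : Disjoint J K
  disj_JT : Disjoint J T
  disj_KT : Disjoint K T
  /-- every vertex is `v` or belongs to one of `I`, `J`, `K`, `T` -/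
  cover : ∀ x : V, x = v ∨ x ∈ I ∨ x ∈ J ∨ x ∈ K ∨ x ∈ T
  /-- `v` has an out-edge to each element of `T` and no other out-edges -/
  v_out : ∀ w, adj v w ↔ w ∈ T
  /-- each `i ∈ I` has exactly one out-edge, namely to `v` -/
  I_out : ∀ i ∈ I, ∀ w, adj i w ↔ w = v
  /-- each `j ∈ J` has an out-edge to `v` -/
  J_cites_v : ∀ j ∈ J, adj j v
  /-- each `j ∈ J` has at least one out-edge into `T` -/
  J_cites_T : ∀ j ∈ J, ∃ t ∈ T, adj j t
  /-- every out-edge of `j ∈ J` goes to `{v} ∪ T` -/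
  J_out : ∀ j ∈ J, ∀ w, adj j w → w = v ∨ w ∈ T
  /-- each `k ∈ K` has at least one out-edge -/
  K_cites : ∀ k ∈ K, ∃ w, adj k w
  /-- every out-edge of `k ∈ K` goes into `T` -/
  K_out : ∀ k ∈ K, ∀ w, adj k w → w ∈ T
  /-- vertices in `T` have no out-edges -/
  T_out : ∀ t ∈ T, ∀ w, ¬ adj t w

/-- The out-degree of a vertex `u`: the number of out-neighbors of `u`. -/
noncomputable def CDGraph.degout (G : CDGraph V) (u : V) : ℕ :=
  {w | G.adj u w}.ncard

/-- The in-degree of the focal vertex `v`, namely `n_I + n_J`. -/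
def CDGraph.degin (G : CDGraph V) : ℕ := G.I.card + G.J.card

/-- The raw betweenness of the focal vertex `v`:
`B(v) = Σ_{s ≠ v} Σ_{t ≠ v} σ(s,t∣v)/σ(s,t)`, where terms with `σ(s,t) = 0`
count as `0` (division by zero in `ℝ` yields `0`). -/
noncomputable def CDGraph.B [Fintype V] [DecidableEq V] (G : CDGraph V) : ℝ :=
  ∑ s ∈ univ.erase G.v, ∑ t ∈ univ.erase G.v,
    (numShortestThrough G.adj s t G.v : ℝ) / (numShortest G.adj s t : ℝ)

/-
Every edge of a CD graph ends in `{v} ∪ T`, and `T` has no out-edges, so the middle vertex of any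
two-edge walk is `v` and no path has more than three vertices. A shortest path from `s` to `t`
through `v` is therefore `[s, v, t]`; every other shortest path from `s` to `t` also has three
vertices, hence is `[s, v, t]` as well, so `σ(s,t) = 1` whenever `σ(s,t|v) ≠ 0`.
-/

section Paths

variable {adj : V → V → Prop} {s t : V} {l : List V}

lemma ListInterior.three_le_length {x : V} (h : ListInterior l x) : 3 ≤ l.length := by
  have h1 : 0 < l.tail.dropLast.length := List.length_pos_of_mem h
  simp only [List.length_dropLast, List.length_tail] at h1
  omega

lemma IsDirPath.exists_eq_triple (hl : IsDirPath adj s t l) (h3 : l.length = 3) :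
    ∃ b, l = [s, b, t] ∧ adj s b ∧ adj b t := by
  obtain ⟨a, b, c, rfl⟩ := List.length_eq_three.1 h3
  obtain ⟨hchain, hs, ht, -⟩ := hl
  obtain rfl : a = s := by simpa using hs
  obtain rfl : c = t := by simpa [List.getLast?] using ht
  rw [List.Chain', List.isChain_cons_cons, List.isChain_cons_cons] at hchain
  exact ⟨b, rfl, hchain.1, hchain.2.1⟩

lemma IsShortestDirPath.length_eq {l' : List V} (hl : IsShortestDirPath adj s t l)
    (hl' : IsShortestDirPath adj s t l') : l.length = l'.length :=
  le_antisymm (hl.2 _ hl'.1) (hl'.2 _ hl.1)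

end Paths

namespace CDGraph

variable (G : CDGraph V)

lemma eq_v_or_mem_T_of_adj {u w : V} (h : G.adj u w) : w = G.v ∨ w ∈ G.T := by
  rcases G.cover u with rfl | hI | hJ | hK | hT
  · exact Or.inr ((G.v_out w).1 h)
  · exact Or.inl ((G.I_out u hI w).1 h)
  · exact G.J_out u hJ w h
  · exact Or.inr (G.K_out u hK w h)
  · exact absurd h (G.T_out u hT w)

lemma eq_v_of_adj_of_adj {a b c : V} (hab : G.adj a b) (hbc : G.adj b c) : b = G.v :=
  (G.eq_v_or_mem_T_of_adj hab).resolve_right fun hbT => G.T_out b hbT c hbc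

lemma length_le_three_of_chain {l : List V} (h : l.IsChain G.adj) : l.length ≤ 3 := by
  match l, h with
  | [], _ | [_], _ | [_, _], _ | [_, _, _], _ => simp
  | a :: b :: c :: d :: _, h =>
    rw [List.isChain_cons_cons, List.isChain_cons_cons, List.isChain_cons_cons] at h
    obtain ⟨hab, hbc, hcd, -⟩ := h
    have hb := G.eq_v_of_adj_of_adj hab hbc
    subst hb
    exact absurd hcd (G.T_out c ((G.v_out c).1 hbc) d)

lemma eq_triple_of_isDirPath {s t : V} {l : List V} (hl : IsDirPath G.adj s t l)
    (h3 : l.length = 3) : l = [s, G.v, t] := by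
  obtain ⟨b, rfl, hsb, hbt⟩ := hl.exists_eq_triple h3
  rw [G.eq_v_of_adj_of_adj hsb hbt]

lemma numShortest_eq_one_of_numShortestThrough_ne_zero {s t : V}
    (h : numShortestThrough G.adj s t G.v ≠ 0) : numShortest G.adj s t = 1 := by
  obtain ⟨l, hl, hv⟩ := Set.nonempty_of_ncard_ne_zero h
  have hl3 : l.length = 3 :=
    le_antisymm (G.length_le_three_of_chain hl.1.1) hv.three_le_length
  have hpaths : {l' : List V | IsShortestDirPath G.adj s t l'} = {l} := by
    refine Set.eq_singleton_iff_unique_mem.2 ⟨hl, fun l' hl' => ?_⟩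
    rw [G.eq_triple_of_isDirPath hl.1 hl3,
      G.eq_triple_of_isDirPath hl'.1 ((hl'.length_eq hl).trans hl3)]
  rw [numShortest, hpaths, Set.ncard_singleton]

end CDGraph

/-- In a CD neighborhood graph, the raw betweenness of the focal vertex
equals the total count of shortest paths through it:
`B(v) = Σ_{s ≠ v} Σ_{t ≠ v} σ(s,t∣v)`. -/
theorem cd_betweenness_eq_path_count [Fintype V] [DecidableEq V] (G : CDGraph V) :
    G.B = ∑ s ∈ univ.erase G.v, ∑ t ∈ univ.erase G.v,
      (numShortestThrough G.adj s t G.v : ℝ) := by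
  unfold CDGraph.B
  refine sum_congr rfl fun s _ => sum_congr rfl fun t _ => ?_
  by_cases h : numShortestThrough G.adj s t G.v = 0
  · simp [h]
  · rw [G.numShortest_eq_one_of_numShortestThrough_ne_zero h, Nat.cast_one, div_one]
end

section
/- In a CD neighborhood graph, the raw betweenness of the focal vertex satisfies the exact counting identity B(v) = degout(v)·n_I + Σ_{j ∈ J} (degout(v) − degout(j) + 1), where n_I = |I|. -/
open Finset

variable {V : Type*}

/-! Every edge ends at `v` or in `T`, and `T` is a sink, so directed paths have at most three
vertices. For `s ≠ t` the shortest path is therefore the edge `s → t` when it exists and otherwise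
the unique path `s → v → t`, which exists exactly when `s ∈ I ∪ J` and `t ∈ T`. So `v` carries the
full dependency `1` of precisely the pairs with `s ∈ I ∪ J`, `t ∈ T` and no edge `s → t`; for
fixed `s` there are `|T| - (degout s - 1)` of them, and `degout i = 1` for `i ∈ I`. -/

noncomputable def pairDependency (adj : V → V → Prop) (s t x : V) : ℝ :=
  (numShortestThrough adj s t x : ℝ) / (numShortest adj s t : ℝ)

section ShortestPaths

variable {adj : V → V → Prop} {s t x : V} {l p : List V}

lemma isDirPath_singleton : IsDirPath adj s s [s] :=
  ⟨List.isChain_singleton s, rfl, rfl, List.nodup_singleton s⟩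

lemma IsDirPath.cases_of_length_le_three (h : IsDirPath adj s t l) (hl : l.length ≤ 3) :
    (l = [s] ∧ s = t) ∨ (l = [s, t] ∧ adj s t) ∨ ∃ y, l = [s, y, t] ∧ adj s y ∧ adj y t := by
  obtain ⟨hc, hh, ht, -⟩ := h
  replace hc : l.IsChain adj := hc
  rcases l with _ | ⟨a, _ | ⟨b, _ | ⟨c, _ | ⟨d, r⟩⟩⟩⟩
  · simp at hh
  · simp_all
  · simp_all
  · simp_all
  · simp only [List.length_cons] at hl
    omega

lemma isShortestDirPath_iff_of_forall (hp : IsDirPath adj s t p)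
    (h : ∀ l, IsDirPath adj s t l → l.length ≤ p.length → l = p) :
    IsShortestDirPath adj s t l ↔ l = p := by
  constructor
  · rintro ⟨hl, hmin⟩
    exact h l hl (hmin p hp)
  · rintro rfl
    refine ⟨hp, fun l' hl' => ?_⟩
    by_contra hlt
    rw [h l' hl' (by omega)] at hlt
    exact hlt le_rfl

lemma isShortestDirPath_self_iff : IsShortestDirPath adj s s l ↔ l = [s] := by
  refine isShortestDirPath_iff_of_forall isDirPath_singleton fun l hl hlen => ?_
  rcases hl.cases_of_length_le_three (by simp at hlen; omega) with
    ⟨rfl, -⟩ | ⟨rfl, -⟩ | ⟨y, rfl, -⟩ <;> simp_all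

lemma isShortestDirPath_iff_of_adj (hst : s ≠ t) (h : adj s t) :
    IsShortestDirPath adj s t l ↔ l = [s, t] := by
  have hp : IsDirPath adj s t [s, t] := ⟨(by simpa using h : List.IsChain adj [s, t]), rfl, rfl,
    by simpa using hst⟩
  refine isShortestDirPath_iff_of_forall hp fun l hl hlen => ?_
  rcases hl.cases_of_length_le_three (by simp at hlen; omega) with
    ⟨rfl, rfl⟩ | ⟨rfl, -⟩ | ⟨y, rfl, -⟩
  · exact absurd rfl hst
  · rfl
  · simp at hlen

lemma isShortestDirPath_iff_of_unique_midpoint (hst : s ≠ t) (hn : ¬ adj s t) (hsx : s ≠ x)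
    (hxt : x ≠ t) (hmid : ∀ y, adj s y ∧ adj y t ↔ y = x) :
    IsShortestDirPath adj s t l ↔ l = [s, x, t] := by
  have hp : IsDirPath adj s t [s, x, t] :=
    ⟨(by simpa using (hmid x).2 rfl : List.IsChain adj [s, x, t]), rfl, rfl, by simp [*]⟩
  refine isShortestDirPath_iff_of_forall hp fun l hl hlen => ?_
  rcases hl.cases_of_length_le_three hlen with ⟨rfl, rfl⟩ | ⟨rfl, h⟩ | ⟨y, rfl, hy⟩
  · exact absurd rfl hst
  · exact absurd h hn
  · rw [(hmid y).1 hy]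

lemma pairDependency_eq_of_forall_isShortestDirPath_iff [Decidable (ListInterior p x)]
    (h : ∀ l, IsShortestDirPath adj s t l ↔ l = p) :
    pairDependency adj s t x = if ListInterior p x then 1 else 0 := by
  unfold pairDependency numShortest numShortestThrough
  have hσx : {l | l = p ∧ ListInterior l x} = {l | l = p ∧ ListInterior p x} :=
    Set.ext fun l => and_congr_right fun hl => hl ▸ Iff.rfl
  simp only [h, hσx]
  by_cases hx : ListInterior p x <;> simp [hx]

lemma pairDependency_eq_zero_of_forall_not_isDirPath (h : ∀ l, ¬ IsDirPath adj s t l) :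
    pairDependency adj s t x = 0 := by
  have : ∀ l, ¬ IsShortestDirPath adj s t l := fun l hl => h l hl.1
  simp [pairDependency, numShortest, this]

end ShortestPaths

namespace CDGraph

variable (G : CDGraph V) {s t x : V}

lemma adj_target (h : G.adj s t) : t = G.v ∨ t ∈ G.T := by
  rcases G.cover s with rfl | hs | hs | hs | hs
  · exact .inr ((G.v_out t).1 h)
  · exact .inl ((G.I_out s hs t).1 h)
  · exact G.J_out s hs t h
  · exact .inr (G.K_out s hs t h)
  · exact absurd h (G.T_out s hs t)

lemma adj_v_iff : G.adj s G.v ↔ s ∈ G.I ∨ s ∈ G.J := by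
  refine ⟨fun h => ?_, ?_⟩
  · rcases G.cover s with rfl | hs | hs | hs | hs
    · exact absurd ((G.v_out _).1 h) G.v_not_T
    · exact .inl hs
    · exact .inr hs
    · exact absurd (G.K_out s hs _ h) G.v_not_T
    · exact absurd h (G.T_out s hs _)
  · rintro (hs | hs)
    · exact (G.I_out s hs _).2 rfl
    · exact G.J_cites_v s hs

lemma adj_adj_iff : G.adj s x ∧ G.adj x t ↔ x = G.v ∧ (s ∈ G.I ∨ s ∈ G.J) ∧ t ∈ G.T := by
  refine ⟨fun ⟨hsx, hxt⟩ => ?_, ?_⟩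
  · rcases G.adj_target hsx with rfl | hx
    · exact ⟨rfl, G.adj_v_iff.1 hsx, (G.v_out t).1 hxt⟩
    · exact absurd hxt (G.T_out x hx t)
  · rintro ⟨rfl, hs, ht⟩
    exact ⟨G.adj_v_iff.2 hs, (G.v_out t).2 ht⟩

lemma length_le_three_of_isDirPath {l : List V} (h : IsDirPath G.adj s t l) : l.length ≤ 3 := by
  have hc : l.IsChain G.adj := h.1
  rcases l with _ | ⟨a, _ | ⟨b, _ | ⟨c, _ | ⟨d, r⟩⟩⟩⟩
  iterate 4 · simp
  simp only [List.isChain_cons_cons] at hc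
  exact absurd hc.2.2.1 <| G.T_out c (G.adj_adj_iff.1 ⟨hc.1, hc.2.1⟩).2.2 d

lemma not_isDirPath (hst : s ≠ t) (hn : ¬ G.adj s t) (h : ¬ ((s ∈ G.I ∨ s ∈ G.J) ∧ t ∈ G.T))
    (l : List V) : ¬ IsDirPath G.adj s t l := by
  intro hl
  rcases hl.cases_of_length_le_three (G.length_le_three_of_isDirPath hl) with
    ⟨-, rfl⟩ | ⟨-, hadj⟩ | ⟨y, -, hy⟩
  · exact hst rfl
  · exact hn hadj
  · exact h (G.adj_adj_iff.1 hy).2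

open Classical in
lemma pairDependency_v (s t : V) :
    pairDependency G.adj s t G.v
      = if (s ∈ G.I ∨ s ∈ G.J) ∧ t ∈ G.T ∧ ¬ G.adj s t then 1 else 0 := by
  by_cases hst : s = t
  · subst hst
    rw [pairDependency_eq_of_forall_isShortestDirPath_iff fun _ => isShortestDirPath_self_iff,
      if_neg (by simp [ListInterior]), eq_comm, if_neg]
    rintro ⟨hs | hs, ht, -⟩
    exacts [disjoint_left.1 G.disj_IT hs ht, disjoint_left.1 G.disj_JT hs ht]
  by_cases hadj : G.adj s t
  · rw [pairDependency_eq_of_forall_isShortestDirPath_iff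
      fun _ => isShortestDirPath_iff_of_adj hst hadj]
    simp [ListInterior, hadj]
  by_cases hc : (s ∈ G.I ∨ s ∈ G.J) ∧ t ∈ G.T
  · have hsv : s ≠ G.v := by rintro rfl; exact hc.1.elim G.v_not_I G.v_not_J
    have hvt : G.v ≠ t := by rintro rfl; exact G.v_not_T hc.2
    have hmid : ∀ y, G.adj s y ∧ G.adj y t ↔ y = G.v := fun y => by simp [G.adj_adj_iff, hc]
    rw [pairDependency_eq_of_forall_isShortestDirPath_iff fun _ =>
      isShortestDirPath_iff_of_unique_midpoint hst hadj hsv hvt hmid]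
    simp [ListInterior, hc, hadj]
  · rw [pairDependency_eq_zero_of_forall_not_isDirPath (G.not_isDirPath hst hadj hc), if_neg]
    tauto

open Classical in
lemma sum_pairDependency_v [Fintype V] [DecidableEq V] (s : V) :
    ∑ t ∈ univ.erase G.v, pairDependency G.adj s t G.v
      = if s ∈ G.I ∪ G.J then (#(G.T.filter (¬ G.adj s ·)) : ℝ) else 0 := by
  simp_rw [G.pairDependency_v, mem_union]
  split_ifs with hs
  · simp only [hs, true_and]
    rw [sum_boole]
    congr 2
    ext t
    simp only [mem_filter, mem_erase, mem_univ, and_true]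
    exact ⟨fun h => h.2, fun h => ⟨fun htv => G.v_not_T (htv ▸ h.1), h⟩⟩
  · exact sum_eq_zero fun t _ => if_neg fun h => hs h.1

open Classical in
lemma B_eq_sum_card_filter_not_adj [Fintype V] [DecidableEq V] :
    G.B = ∑ s ∈ G.I ∪ G.J, (#(G.T.filter (¬ G.adj s ·)) : ℝ) := by
  change ∑ s ∈ univ.erase G.v, ∑ t ∈ univ.erase G.v, pairDependency G.adj s t G.v = _
  simp_rw [G.sum_pairDependency_v, sum_ite_mem]
  congr 1
  refine inter_eq_right.2 fun s hs => mem_erase.2 ⟨?_, mem_univ s⟩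
  rintro rfl
  exact (mem_union.1 hs).elim G.v_not_I G.v_not_J

lemma degout_v : G.degout G.v = #G.T := by
  rw [degout, ← Set.ncard_coe_finset]
  congr 1
  ext w
  exact G.v_out w

lemma degout_of_mem_I (hs : s ∈ G.I) : G.degout s = 1 := by
  rw [degout, Set.ncard_eq_one]
  exact ⟨G.v, Set.ext (G.I_out s hs)⟩

open Classical in
lemma degout_eq_card_filter_adj_add_one (hs : s ∈ G.I ∨ s ∈ G.J) :
    G.degout s = #(G.T.filter (G.adj s ·)) + 1 := by
  have hout : {w | G.adj s w} = insert G.v ↑(G.T.filter (G.adj s ·)) := by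
    ext w
    simp only [Set.mem_ofPred_eq, Set.mem_insert_iff, coe_filter]
    refine ⟨fun h => (G.adj_target h).imp id fun hw => ⟨hw, h⟩, ?_⟩
    rintro (rfl | ⟨-, h⟩)
    exacts [G.adj_v_iff.2 hs, h]
  rw [degout, hout, Set.ncard_insert_of_notMem (by simp [G.v_not_T]), Set.ncard_coe_finset]

open Classical in
lemma card_filter_not_adj (hs : s ∈ G.I ∨ s ∈ G.J) :
    (#(G.T.filter (¬ G.adj s ·)) : ℝ) = G.degout G.v - G.degout s + 1 := by
  have hsplit := card_filter_add_card_filter_not (s := G.T) (G.adj s ·)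
  rw [G.degout_v, G.degout_eq_card_filter_adj_add_one hs, ← hsplit]
  push_cast
  ring

end CDGraph

/-- In a CD neighborhood graph, the raw betweenness of the focal vertex
satisfies the exact counting identity
`B(v) = degout(v)·n_I + Σ_{j ∈ J} (degout(v) − degout(j) + 1)`, where `n_I = |I|`. -/
theorem cd_betweenness_counting_identity [Fintype V] [DecidableEq V] (G : CDGraph V) :
    G.B = (G.degout G.v : ℝ) * (G.I.card : ℝ)
        + ∑ j ∈ G.J, ((G.degout G.v : ℝ) - (G.degout j : ℝ) + 1) := by
  rw [G.B_eq_sum_card_filter_not_adj, sum_union G.disj_IJ]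
  congr 1
  · rw [sum_congr rfl fun i hi => by rw [G.card_filter_not_adj (.inl hi), G.degout_of_mem_I hi]]
    simp [mul_comm]
  · exact sum_congr rfl fun j hj => G.card_filter_not_adj (.inr hj)
end
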